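/- arXiv:1510.04232 — 2 statements merged into one kernel-verified Lean document; each statement's English description precedes it below -/
import Mathlib

section
/- Let Z be a real Hilbert space, C a closed subspace, E a subset of Z, and x in E ∩ C. Suppose E_k ⊆ Z, and (x_k, y_k) ∈ C × E_k minimizes |x' - y'| over C × E_k. Assume: (i) dist(z, E_k) <= ρ_k for all z in E; (ii) dist(z, E) <= t_k for all z in E_k; (iii) there is 0 <= λ < 1 with |P_C z - x| <= λ |z - x| for all z in E. Then |x_k - x| <= (t_k + λ(t_k + ρ_k)) / (1 - λ). -/
/-!
Since `xₖ` is a closest point of `C` to `yₖ`, it is the orthogonal projection `P yₖ`. For any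
`z ∈ E`, nonexpansiveness of `P` and the contraction hypothesis give
`‖xₖ - x‖ ≤ ‖yₖ - z‖ + λ ‖z - x‖`, while `‖z - x‖ ≤ ‖yₖ - z‖ + ‖xₖ - yₖ‖ + ‖xₖ - x‖`
and `‖xₖ - yₖ‖ ≤ dist(x, Eₖ) ≤ ρ` because `x ∈ C`. Hence
`(1 - λ) ‖xₖ - x‖ ≤ (1 + λ) ‖yₖ - z‖ + λ ρ`; taking the infimum over `z ∈ E` replaces
`‖yₖ - z‖` by `dist(yₖ, E) ≤ t`.
-/

open Metric

namespace Submodule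

variable {𝕜 E : Type*} [RCLike 𝕜] [NormedAddCommGroup E] [InnerProductSpace 𝕜 E]
  {K : Submodule 𝕜 E} [K.HasOrthogonalProjection]

theorem starProjection_eq_of_forall_norm_sub_le {u v : E} (hv : v ∈ K)
    (hmin : ∀ w ∈ K, ‖u - v‖ ≤ ‖u - w‖) : K.starProjection u = v := by
  refine eq_starProjection_of_mem_of_inner_eq_zero hv ((K.norm_eq_iInf_iff_inner_eq_zero hv).1 ?_)
  exact le_antisymm (le_ciInf fun w ↦ hmin w w.2)
    (ciInf_le ⟨0, Set.forall_mem_range.2 fun _ ↦ norm_nonneg _⟩ (⟨v, hv⟩ : K))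

end Submodule

section Estimate

variable {E : Type*} [SeminormedAddCommGroup E] {P : E → E} {x y z : E} {lam ρ : ℝ}

theorem one_sub_mul_norm_sub_le_of_lipschitzWith (hP : LipschitzWith 1 P) (hlam : 0 ≤ lam)
    (hy : ‖P y - y‖ ≤ ρ) (hz : ‖P z - x‖ ≤ lam * ‖z - x‖) :
    (1 - lam) * ‖P y - x‖ ≤ (1 + lam) * ‖y - z‖ + lam * ρ := by
  have hPyz : ‖P y - P z‖ ≤ ‖y - z‖ := by
    simpa only [dist_eq_norm, NNReal.coe_one, one_mul] using hP.dist_le_mul y z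
  have hPy : ‖P y - x‖ ≤ ‖y - z‖ + lam * ‖z - x‖ :=
    (norm_sub_le_norm_sub_add_norm_sub _ (P z) _).trans (add_le_add hPyz hz)
  have hzx : ‖z - x‖ ≤ ‖y - z‖ + ρ + ‖P y - x‖ := by
    calc ‖z - x‖ ≤ ‖z - y‖ + ‖y - P y‖ + ‖P y - x‖ := by
          simpa only [dist_eq_norm] using dist_triangle4 z y (P y) x
      _ = ‖y - z‖ + ‖P y - y‖ + ‖P y - x‖ := by
          rw [norm_sub_rev z y, norm_sub_rev y (P y)]
      _ ≤ ‖y - z‖ + ρ + ‖P y - x‖ := by gcongr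
  nlinarith [mul_le_mul_of_nonneg_left hzx hlam]

theorem one_sub_mul_norm_sub_le_infDist {S : Set E} (hS : S.Nonempty) (hP : LipschitzWith 1 P)
    (hlam : 0 ≤ lam) (hy : ‖P y - y‖ ≤ ρ) (hPS : ∀ z ∈ S, ‖P z - x‖ ≤ lam * ‖z - x‖) :
    (1 - lam) * ‖P y - x‖ ≤ (1 + lam) * infDist y S + lam * ρ := by
  have h1lam : 0 < 1 + lam := by linarith
  suffices ((1 - lam) * ‖P y - x‖ - lam * ρ) / (1 + lam) ≤ infDist y S by
    rw [div_le_iff₀ h1lam] at this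
    linarith
  refine (le_infDist hS).2 fun z hz ↦ ?_
  rw [div_le_iff₀ h1lam, dist_eq_norm]
  linarith [one_sub_mul_norm_sub_le_of_lipschitzWith hP hlam hy (hPS z hz)]

end Estimate

theorem stmt_3_general {Z : Type*} [NormedAddCommGroup Z] [InnerProductSpace ℝ Z]
    (C : Submodule ℝ Z) [CompleteSpace C] (E Ek : Set Z) (x : Z) (hxE : x ∈ E) (hxC : x ∈ C)
    (ρ t lam : ℝ) (hlam0 : 0 ≤ lam) (hlam1 : lam < 1)
    (xk yk : Z) (hxk : xk ∈ (C : Set Z)) (hyk : yk ∈ Ek)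
    (hmin : ∀ x' ∈ (C : Set Z), ∀ y' ∈ Ek, ‖xk - yk‖ ≤ ‖x' - y'‖)
    (hdense : ∀ z ∈ E, Metric.infDist z Ek ≤ ρ)
    (hnooutlier : ∀ z ∈ Ek, Metric.infDist z E ≤ t)
    (htrans : ∀ z ∈ E, ‖(C.orthogonalProjectionOnto z : Z) - x‖ ≤ lam * ‖z - x‖) :
    ‖xk - x‖ ≤ (t + lam * (t + ρ)) / (1 - lam) := by
  have hproj : C.starProjection yk = xk :=
    Submodule.starProjection_eq_of_forall_norm_sub_le hxk fun w hw ↦ by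
      simpa only [norm_sub_rev yk] using hmin w hw yk hyk
  have hρk : ‖xk - yk‖ ≤ ρ :=
    ((le_infDist ⟨yk, hyk⟩).2 fun y hy ↦ by
      simpa only [dist_eq_norm] using hmin x hxC y hy).trans (hdense x hxE)
  have key := one_sub_mul_norm_sub_le_infDist (y := yk) (ρ := ρ) ⟨x, hxE⟩
    C.lipschitzWith_starProjection hlam0 (by rwa [hproj]) htrans
  rw [hproj] at key
  have ht := mul_le_mul_of_nonneg_left (hnooutlier yk hyk) (by linarith : 0 ≤ 1 + lam)
  rw [le_div_iff₀ (by linarith), mul_comm]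
  linarith

/-- Convergence estimate for the data-driven problem (Proposition 1). -/
theorem stmt_3 {Z : Type*} [NormedAddCommGroup Z] [InnerProductSpace ℝ Z]
    [CompleteSpace Z] (C : Submodule ℝ Z) (hCcl : IsClosed (C : Set Z))
    [CompleteSpace C] (E Ek : Set Z) (x : Z) (hxE : x ∈ E) (hxC : x ∈ C)
    (ρ t lam : ℝ) (hρ : 0 ≤ ρ) (ht : 0 ≤ t) (hlam0 : 0 ≤ lam) (hlam1 : lam < 1)
    (xk yk : Z) (hxk : xk ∈ (C : Set Z)) (hyk : yk ∈ Ek)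
    (hmin : ∀ x' ∈ (C : Set Z), ∀ y' ∈ Ek, ‖xk - yk‖ ≤ ‖x' - y'‖)
    (hdense : ∀ z ∈ E, Metric.infDist z Ek ≤ ρ)
    (hnooutlier : ∀ z ∈ Ek, Metric.infDist z E ≤ t)
    (htrans : ∀ z ∈ E, ‖(C.orthogonalProjectionOnto z : Z) - x‖ ≤ lam * ‖z - x‖) :
    ‖xk - x‖ ≤ (t + lam * (t + ρ)) / (1 - lam) :=
  stmt_3_general C E Ek x hxE hxC ρ t lam hlam0 hlam1 xk yk hxk hyk hmin hdense hnooutlier htrans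
end

section
/- Under the hypotheses of the data-driven convergence proposition, if additionally ρ_k → 0 and t_k → 0 as k → ∞, then x_k → x in Z. -/
/-!
Comparing `(x_k, y_k)` with `(x, y')` for `y' ∈ E_k` near `x` gives `‖x_k - y_k‖ ≤ ρ_k`, hence
`dist(x_k, E) ≤ ρ_k + t_k`. For `x' ∈ C` and `z ∈ E`, since `P_C x' = x'` and `P_C` is
`1`-Lipschitz, transversality yields `‖x' - x‖ ≤ ‖x' - z‖ + λ (‖z - x'‖ + ‖x' - x‖)`, i.e.
`‖x_k - x‖ ≤ (1 + λ) / (1 - λ) · dist(x_k, E) → 0`.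
-/

open Metric

theorem Submodule.norm_sub_orthogonalProjectionOnto_le {𝕜 E : Type*} [RCLike 𝕜]
    [NormedAddCommGroup E] [InnerProductSpace 𝕜 E] (K : Submodule 𝕜 E)
    [K.HasOrthogonalProjection] {v : E} (hv : v ∈ K) (z : E) :
    ‖v - (K.orthogonalProjectionOnto z : E)‖ ≤ ‖v - z‖ := by
  have hPv : K.starProjection v = v := K.starProjection_eq_self_iff.mpr hv
  calc ‖v - (K.orthogonalProjectionOnto z : E)‖ = ‖K.starProjection (v - z)‖ := by
        rw [map_sub, hPv, K.coe_orthogonalProjectionOnto_apply]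
    _ ≤ ‖v - z‖ := K.norm_starProjection_apply_le _

section Transversality

variable {Z : Type*} [NormedAddCommGroup Z] [InnerProductSpace ℝ Z]
  {C : Submodule ℝ Z} [C.HasOrthogonalProjection] {E : Set Z} {x : Z} {lam : ℝ}

theorem one_sub_mul_norm_sub_le_of_transversal (hlam0 : 0 ≤ lam)
    (htrans : ∀ z ∈ E, ‖(C.orthogonalProjectionOnto z : Z) - x‖ ≤ lam * ‖z - x‖)
    {x' z : Z} (hx' : x' ∈ C) (hz : z ∈ E) :
    (1 - lam) * ‖x' - x‖ ≤ (1 + lam) * ‖x' - z‖ := by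
  have hzx : ‖z - x‖ ≤ ‖x' - z‖ + ‖x' - x‖ := by
    rw [norm_sub_rev x' z]; exact norm_sub_le_norm_sub_add_norm_sub z x' x
  have hproj : ‖x' - x‖ ≤ ‖x' - z‖ + lam * ‖z - x‖ :=
    calc ‖x' - x‖ ≤ ‖x' - (C.orthogonalProjectionOnto z : Z)‖
          + ‖(C.orthogonalProjectionOnto z : Z) - x‖ := norm_sub_le_norm_sub_add_norm_sub _ _ _
      _ ≤ ‖x' - z‖ + lam * ‖z - x‖ :=
          add_le_add (C.norm_sub_orthogonalProjectionOnto_le hx' z) (htrans z hz)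
  nlinarith [mul_le_mul_of_nonneg_left hzx hlam0]

theorem norm_sub_le_mul_infDist_of_transversal (hlam0 : 0 ≤ lam) (hlam1 : lam < 1)
    (htrans : ∀ z ∈ E, ‖(C.orthogonalProjectionOnto z : Z) - x‖ ≤ lam * ‖z - x‖)
    (hE : E.Nonempty) {x' : Z} (hx' : x' ∈ C) :
    ‖x' - x‖ ≤ (1 + lam) / (1 - lam) * infDist x' E := by
  have h1lam : 0 < 1 - lam := sub_pos.mpr hlam1
  rw [div_mul_eq_mul_div, le_div_iff₀ h1lam, ← div_le_iff₀' (by linarith), le_infDist hE]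
  intro z hz
  rw [div_le_iff₀' (by linarith), dist_eq_norm, mul_comm]
  exact one_sub_mul_norm_sub_le_of_transversal hlam0 htrans hx' hz

end Transversality

theorem norm_sub_le_infDist_of_forall_le {Z : Type*} [SeminormedAddCommGroup Z] {B : Set Z}
    {a b a' : Z} (hb : b ∈ B) (hmin : ∀ b' ∈ B, ‖a - b‖ ≤ ‖a' - b'‖) :
    ‖a - b‖ ≤ infDist a' B :=
  (le_infDist ⟨b, hb⟩).mpr fun b' hb' => (hmin b' hb').trans_eq (dist_eq_norm a' b').symm

theorem stmt_4_general {Z : Type*} [NormedAddCommGroup Z] [InnerProductSpace ℝ Z]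
    (C : Submodule ℝ Z)
    [CompleteSpace C] (E : Set Z) (Ek : ℕ → Set Z) (x : Z) (hxE : x ∈ E) (hxC : x ∈ C)
    (ρ t : ℕ → ℝ)
    (lam : ℝ) (hlam0 : 0 ≤ lam) (hlam1 : lam < 1)
    (xk yk : ℕ → Z) (hxk : ∀ k, xk k ∈ (C : Set Z)) (hyk : ∀ k, yk k ∈ Ek k)
    (hmin : ∀ k, ∀ x' ∈ (C : Set Z), ∀ y' ∈ Ek k, ‖xk k - yk k‖ ≤ ‖x' - y'‖)
    (hdense : ∀ k, ∀ z ∈ E, Metric.infDist z (Ek k) ≤ ρ k)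
    (hnooutlier : ∀ k, ∀ z ∈ Ek k, Metric.infDist z E ≤ t k)
    (htrans : ∀ z ∈ E, ‖(C.orthogonalProjectionOnto z : Z) - x‖ ≤ lam * ‖z - x‖)
    (hρ0 : Filter.Tendsto ρ Filter.atTop (nhds 0))
    (ht0 : Filter.Tendsto t Filter.atTop (nhds 0)) :
    Filter.Tendsto xk Filter.atTop (nhds x) := by
  set M := (1 + lam) / (1 - lam)
  have hM : 0 ≤ M := div_nonneg (by linarith) (by linarith)
  have hbound : ∀ k, ‖xk k - x‖ ≤ M * (ρ k + t k) := fun k => by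
    have hgap : dist (xk k) (yk k) ≤ ρ k := by
      rw [dist_eq_norm]
      exact (norm_sub_le_infDist_of_forall_le (hyk k) (hmin k x hxC)).trans (hdense k x hxE)
    have hdist : infDist (xk k) E ≤ ρ k + t k := by
      linarith [infDist_le_infDist_add_dist (x := xk k) (y := yk k) (s := E),
        hnooutlier k (yk k) (hyk k)]
    exact (norm_sub_le_mul_infDist_of_transversal hlam0 hlam1 htrans ⟨x, hxE⟩ (hxk k)).trans
      (mul_le_mul_of_nonneg_left hdist hM)
  rw [tendsto_iff_norm_sub_tendsto_zero]
  refine squeeze_zero (fun k => norm_nonneg _) hbound ?_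
  simpa using (hρ0.add ht0).const_mul M

/-- If additionally `ρ_k → 0` and `t_k → 0`, the data-driven solutions converge: `x_k → x`. -/
theorem stmt_4 {Z : Type*} [NormedAddCommGroup Z] [InnerProductSpace ℝ Z]
    [CompleteSpace Z] (C : Submodule ℝ Z) (hCcl : IsClosed (C : Set Z))
    [CompleteSpace C] (E : Set Z) (Ek : ℕ → Set Z) (x : Z) (hxE : x ∈ E) (hxC : x ∈ C)
    (ρ t : ℕ → ℝ) (hρ : ∀ k, 0 ≤ ρ k) (ht : ∀ k, 0 ≤ t k)
    (lam : ℝ) (hlam0 : 0 ≤ lam) (hlam1 : lam < 1)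
    (xk yk : ℕ → Z) (hxk : ∀ k, xk k ∈ (C : Set Z)) (hyk : ∀ k, yk k ∈ Ek k)
    (hmin : ∀ k, ∀ x' ∈ (C : Set Z), ∀ y' ∈ Ek k, ‖xk k - yk k‖ ≤ ‖x' - y'‖)
    (hdense : ∀ k, ∀ z ∈ E, Metric.infDist z (Ek k) ≤ ρ k)
    (hnooutlier : ∀ k, ∀ z ∈ Ek k, Metric.infDist z E ≤ t k)
    (htrans : ∀ z ∈ E, ‖(C.orthogonalProjectionOnto z : Z) - x‖ ≤ lam * ‖z - x‖)
    (hρ0 : Filter.Tendsto ρ Filter.atTop (nhds 0))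
    (ht0 : Filter.Tendsto t Filter.atTop (nhds 0)) :
    Filter.Tendsto xk Filter.atTop (nhds x) :=
  stmt_4_general C E Ek x hxE hxC ρ t lam hlam0 hlam1 xk yk hxk hyk hmin hdense hnooutlier htrans
    hρ0 ht0
end
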